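/- Let V be a finite-dimensional real vector space. If two polynomial-exponential functions on V agree, i.e. if \sum_{\lambda} e^{\lambda(v)} P_\lambda(v) = \sum_{\lambda} e^{\lambda(v)} Q_\lambda(v) for all v in V, where P_\lambda, Q_\lambda are complex-coefficient polynomial functions on V vanishing for all but finitely many linear functionals \lambda in V^*, then P_\lambda = Q_\lambda for every \lambda in V^*. -/
import Mathlib

open scoped BigOperators
open Filter Topology

section AuxLimits

private lemma aux_pow_exp (k : ℕ) {c : ℝ} (hc : c < 0) :
    Tendsto (fun t : ℝ => t ^ k * Real.exp (c * t)) atTop (𝓝 0) := by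
  have h2 : Tendsto (fun t : ℝ => -c * t) atTop atTop :=
    Tendsto.const_mul_atTop (by linarith) tendsto_id
  have h1 := (Real.tendsto_pow_mul_exp_neg_atTop_nhds_zero k).comp h2
  have h3 : Tendsto (fun t : ℝ => (-c)⁻¹ ^ k * ((-c * t) ^ k * Real.exp (-(-c * t))))
      atTop (𝓝 ((-c)⁻¹ ^ k * 0)) := tendsto_const_nhds.mul h1
  rw [mul_zero] at h3
  convert h3 using 2 with t
  rw [show -(-c*t) = c*t by ring, mul_pow, ← mul_assoc, ← mul_assoc, ← mul_pow,
    inv_mul_cancel₀ (by linarith : -c ≠ 0), one_pow, one_mul]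

private lemma aux_pow_exp_div (k d : ℕ) {c : ℝ} (hc : c < 0) :
    Tendsto (fun t : ℝ => t ^ k * Real.exp (c * t) / t ^ d) atTop (𝓝 0) := by
  apply squeeze_zero_norm' (a := fun t : ℝ => t ^ k * Real.exp (c * t)) ?_ (aux_pow_exp k hc)
  filter_upwards [eventually_ge_atTop (1 : ℝ)] with t ht
  rw [Real.norm_eq_abs, abs_div, div_le_iff₀ (by positivity)]
  have h1 : |t ^ k * Real.exp (c * t)| = t ^ k * Real.exp (c * t) := by
    rw [abs_of_nonneg]; positivity
  have h2 : |t ^ d| = t ^ d := abs_of_nonneg (by positivity)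
  rw [h1, h2]
  exact le_mul_of_one_le_right (by positivity) (one_le_pow₀ ht)

private lemma aux_pow_div (k d : ℕ) (hkd : k < d) :
    Tendsto (fun t : ℝ => t ^ k / t ^ d) atTop (𝓝 0) := by
  have h : ∀ᶠ t : ℝ in atTop, (t⁻¹) ^ (d - k) = t ^ k / t ^ d := by
    filter_upwards [eventually_gt_atTop (0 : ℝ)] with t ht
    rw [inv_pow, eq_div_iff (by positivity), inv_mul_eq_div, div_eq_iff (by positivity),
      ← pow_add]
    congr 1; omega
  apply Tendsto.congr' h
  have := (tendsto_inv_atTop_zero (𝕜 := ℝ)).pow (d - k)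
  simpa [zero_pow (by omega : d - k ≠ 0)] using this

end AuxLimits

/-- One-variable uniqueness of polynomial-exponential coefficients. -/
private lemma oneDim {ι : Type*} (p : ι → Polynomial ℂ) (a : ι → ℝ) :
    ∀ s : Finset ι, Set.InjOn a s →
    (∀ t : ℝ, ∑ i ∈ s, (p i).eval (t : ℂ) * Complex.exp ((a i * t : ℝ) : ℂ) = 0) →
    ∀ i ∈ s, p i = 0 := by
  classical
  intro s
  induction s using Finset.strongInduction with
  | _ s ih =>
    intro ha h i hi
    obtain ⟨i0, hi0, hmax⟩ := s.exists_max_image a ⟨i, hi⟩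
    set d := (p i0).natDegree with hd
    set F : ℝ → ℂ := fun t => ∑ j ∈ s,
      (p j).eval (t : ℂ) * Complex.exp (((a j - a i0) * t : ℝ) : ℂ) / (t : ℂ) ^ d with hF
    have hF0 : ∀ᶠ t : ℝ in atTop, F t = 0 := by
      filter_upwards [eventually_gt_atTop (0 : ℝ)] with t ht
      have : F t = (∑ j ∈ s, (p j).eval (t : ℂ) * Complex.exp ((a j * t : ℝ) : ℂ)) *
          (Complex.exp ((-(a i0) * t : ℝ) : ℂ) / (t : ℂ) ^ d) := by
        rw [Finset.sum_mul]
        refine Finset.sum_congr rfl fun j hj => ?_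
        have he : Complex.exp (((a j - a i0) * t : ℝ) : ℂ)
            = Complex.exp ((a j * t : ℝ) : ℂ) * Complex.exp ((-(a i0) * t : ℝ) : ℂ) := by
          rw [← Complex.exp_add]; norm_cast; ring_nf
        rw [he]; ring
      rw [this, h t, zero_mul]
    have hlim : ∀ j ∈ s, Tendsto
        (fun t : ℝ => (p j).eval (t : ℂ) * Complex.exp (((a j - a i0) * t : ℝ) : ℂ) / (t : ℂ) ^ d)
        atTop (𝓝 (if j = i0 then (p i0).leadingCoeff else 0)) := by
      intro j hj
      have hexpand : ∀ᶠ t : ℝ in atTop,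
          (p j).eval (t : ℂ) * Complex.exp (((a j - a i0) * t : ℝ) : ℂ) / (t : ℂ) ^ d
          = ∑ k ∈ Finset.range ((p j).natDegree + 1),
              (p j).coeff k * ((t ^ k * Real.exp ((a j - a i0) * t) / t ^ d : ℝ) : ℂ) := by
        filter_upwards [eventually_gt_atTop (0 : ℝ)] with t ht
        rw [Polynomial.eval_eq_sum_range, Finset.sum_mul, Finset.sum_div]
        refine Finset.sum_congr rfl fun k _ => ?_
        push_cast
        ring
      rw [show (if j = i0 then (p i0).leadingCoeff else 0)
          = ∑ k ∈ Finset.range ((p j).natDegree + 1),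
            (if j = i0 ∧ k = d then (p i0).leadingCoeff else 0) from ?_]
      · refine Tendsto.congr' (hexpand.mono fun _ e => e.symm) (tendsto_finset_sum _ fun k hk => ?_)
        by_cases hji : j = i0
        · by_cases hkd2 : k = d
          · rw [if_pos ⟨hji, hkd2⟩]
            have hone : ∀ᶠ t : ℝ in atTop,
                (p j).coeff k * ((t ^ k * Real.exp ((a j - a i0) * t) / t ^ d : ℝ) : ℂ)
                = (p i0).leadingCoeff := by
              filter_upwards [eventually_gt_atTop (0 : ℝ)] with t ht
              rw [hji, sub_self, zero_mul, Real.exp_zero, mul_one, hkd2,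
                div_self (by positivity : (t : ℝ) ^ d ≠ 0)]
              rw [Complex.ofReal_one, mul_one, hd, Polynomial.coeff_natDegree]
            exact Tendsto.congr' (hone.mono fun _ e => e.symm) tendsto_const_nhds
          · rw [if_neg (by tauto)]
            have hkd' : k < d := by
              have h1 := Finset.mem_range.mp hk
              rw [hji, ← hd] at h1
              omega
            have h2 : Tendsto (fun t : ℝ => ((t ^ k * Real.exp ((a j - a i0) * t) / t ^ d : ℝ) : ℂ))
                atTop (𝓝 0) := by
              rw [show ((0:ℂ)) = ((0:ℝ):ℂ) by norm_num]
              apply (Complex.continuous_ofReal.tendsto 0).comp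
              apply Tendsto.congr (fun t => by rw [hji, sub_self, zero_mul, Real.exp_zero, mul_one])
              exact aux_pow_div k d hkd'
            simpa using tendsto_const_nhds.mul h2
        · rw [if_neg (by tauto)]
          have hc : a j - a i0 < 0 := by
            have hle := hmax j hj
            have hne : a j ≠ a i0 := fun e => hji (ha hj hi0 e)
            cases lt_or_eq_of_le hle with
            | inl hlt => linarith
            | inr heq => exact absurd heq hne
          have h2 : Tendsto (fun t : ℝ => ((t ^ k * Real.exp ((a j - a i0) * t) / t ^ d : ℝ) : ℂ))
              atTop (𝓝 0) := by
            rw [show ((0:ℂ)) = ((0:ℝ):ℂ) by norm_num]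
            exact (Complex.continuous_ofReal.tendsto 0).comp (aux_pow_exp_div k d hc)
          simpa using tendsto_const_nhds.mul h2
      · by_cases hji : j = i0
        · subst hji
          rw [if_pos rfl]
          rw [Finset.sum_congr rfl (fun k _ => by
            rw [show (if j = j ∧ k = d then (p j).leadingCoeff else 0)
              = (if k = d then (p j).leadingCoeff else 0) from by
                by_cases hkd3 : k = d
                · rw [if_pos ⟨rfl, hkd3⟩, if_pos hkd3]
                · rw [if_neg (by tauto), if_neg hkd3]])]
          rw [Finset.sum_ite_eq' (Finset.range ((p j).natDegree + 1)) d
            (fun _ => (p j).leadingCoeff),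
            if_pos (Finset.mem_range.mpr (by rw [hd]; exact Nat.lt_succ_self _))]
        · rw [if_neg hji]
          rw [Finset.sum_congr rfl (fun k _ => by rw [if_neg (by tauto)])]
          simp
    have hFl : Tendsto F atTop (𝓝 (p i0).leadingCoeff) := by
      have := tendsto_finset_sum s hlim
      rwa [Finset.sum_ite_eq' s i0 (fun _ => (p i0).leadingCoeff), if_pos hi0] at this
    have hlc : (p i0).leadingCoeff = 0 :=
      tendsto_nhds_unique hFl
        (Tendsto.congr' (hF0.mono fun t ht => ht.symm) tendsto_const_nhds)
    have hp0 : p i0 = 0 := Polynomial.leadingCoeff_eq_zero.mp hlc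
    have herase : ∀ t : ℝ, ∑ j ∈ s.erase i0, (p j).eval (t : ℂ)
        * Complex.exp ((a j * t : ℝ) : ℂ) = 0 := by
      intro t
      rw [Finset.sum_erase _ (by rw [hp0]; simp)]
      exact h t
    by_cases hii : i = i0
    · rw [hii]; exact hp0
    · exact ih (s.erase i0) (Finset.erase_ssubset hi0)
        (ha.mono (by intro x hx; exact Finset.mem_of_mem_erase hx))
        herase i (Finset.mem_erase.mpr ⟨hii, hi⟩)

/-- A polynomial function on a real vector space `V`, with complex values:
an element of the `ℂ`-algebra of functions generated by (complexifications of)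
real linear functionals on `V`. -/
def IsPolynomialFun {V : Type*} [AddCommGroup V] [Module ℝ V] (f : V → ℂ) : Prop :=
  f ∈ Algebra.adjoin ℂ {g : V → ℂ | ∃ μ : V →ₗ[ℝ] ℝ, g = fun v => ((μ v : ℝ) : ℂ)}

private lemma polyFun_line {V : Type*} [AddCommGroup V] [Module ℝ V] {f : V → ℂ}
    (hf : IsPolynomialFun f) (w v0 : V) :
    ∃ p : Polynomial ℂ, ∀ t : ℝ, f (w + t • v0) = p.eval (t : ℂ) := by
  induction hf using Algebra.adjoin_induction with
  | mem g hg =>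
      obtain ⟨μ, rfl⟩ := hg
      refine ⟨Polynomial.C ((μ w : ℝ) : ℂ) + Polynomial.C ((μ v0 : ℝ) : ℂ) * Polynomial.X,
        fun t => ?_⟩
      simp [map_add, map_smul]
      ring
  | algebraMap c => exact ⟨Polynomial.C c, fun t => by simp [Pi.algebraMap_apply]⟩
  | add f g hf hg hf' hg' =>
      obtain ⟨p, hp⟩ := hf'; obtain ⟨q, hq⟩ := hg'
      exact ⟨p + q, fun t => by simp [hp t, hq t]⟩
  | mul f g hf hg hf' hg' =>
      obtain ⟨p, hp⟩ := hf'; obtain ⟨q, hq⟩ := hg'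
      exact ⟨p * q, fun t => by simp [hp t, hq t]⟩

private lemma sep_vec {V : Type*} [AddCommGroup V] [Module ℝ V]
    (T : Finset (V →ₗ[ℝ] ℝ)) (hT : ∀ g ∈ T, g ≠ 0) :
    ∃ v : V, ∀ g ∈ T, g v ≠ 0 := by
  classical
  induction T using Finset.induction with
  | empty => exact ⟨0, by simp⟩
  | @insert g T hgT ih =>
      obtain ⟨v, hv⟩ := ih (fun g' hg' => hT g' (Finset.mem_insert_of_mem hg'))
      have hgne : g ≠ 0 := hT g (Finset.mem_insert_self g T)
      obtain ⟨u, hu⟩ : ∃ u, g u ≠ 0 := by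
        by_contra hcon
        push_neg at hcon
        exact hgne (LinearMap.ext fun x => hcon x)
      obtain ⟨c, hc⟩ := Infinite.exists_notMem_finset
        (((insert g T).image (fun g' => - g' v / g' u)) ∪ {0} : Finset ℝ)
      refine ⟨v + c • u, fun g' hg' => fun he => ?_⟩
      rw [map_add, map_smul, smul_eq_mul] at he
      by_cases hgu : g' u = 0
      · rw [hgu, mul_zero, add_zero] at he
        rcases Finset.mem_insert.mp hg' with rfl | hg'T
        · exact hu (by rw [hgu])
        · exact hv g' hg'T he
      · apply hc
        apply Finset.mem_union_left
        exact Finset.mem_image.mpr ⟨g', hg', by field_simp; linarith [he]⟩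

/-- Uniqueness of the coefficients of a polynomial-exponential function on a
finite-dimensional real vector space. -/
theorem polyExp_unique (V : Type*) [AddCommGroup V] [Module ℝ V] [FiniteDimensional ℝ V]
    (P Q : (V →ₗ[ℝ] ℝ) → V → ℂ)
    (hP : ∀ l, IsPolynomialFun (P l)) (hQ : ∀ l, IsPolynomialFun (Q l))
    (hPfin : {l | P l ≠ 0}.Finite) (hQfin : {l | Q l ≠ 0}.Finite)
    (h : ∀ v : V, ∑ᶠ l : V →ₗ[ℝ] ℝ, Complex.exp ((l v : ℝ) : ℂ) * P l v
        = ∑ᶠ l : V →ₗ[ℝ] ℝ, Complex.exp ((l v : ℝ) : ℂ) * Q l v) :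
    ∀ l, P l = Q l := by
  classical
  set s : Finset (V →ₗ[ℝ] ℝ) := hPfin.toFinset ∪ hQfin.toFinset with hs
  -- the identity as a finite sum
  have hsum : ∀ v : V, ∑ l ∈ s, Complex.exp ((l v : ℝ) : ℂ) * (P l v - Q l v) = 0 := by
    intro v
    have hPs : ∑ᶠ l : V →ₗ[ℝ] ℝ, Complex.exp ((l v : ℝ) : ℂ) * P l v
        = ∑ l ∈ s, Complex.exp ((l v : ℝ) : ℂ) * P l v := by
      apply finsum_eq_finset_sum_of_support_subset
      intro l hl
      simp only [Function.mem_support] at hl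
      have : P l ≠ 0 := by
        intro h0; apply hl; rw [h0]; simp
      simp only [hs, Finset.coe_union, Set.mem_union, Set.Finite.coe_toFinset]
      exact Or.inl this
    have hQs : ∑ᶠ l : V →ₗ[ℝ] ℝ, Complex.exp ((l v : ℝ) : ℂ) * Q l v
        = ∑ l ∈ s, Complex.exp ((l v : ℝ) : ℂ) * Q l v := by
      apply finsum_eq_finset_sum_of_support_subset
      intro l hl
      simp only [Function.mem_support] at hl
      have : Q l ≠ 0 := by
        intro h0; apply hl; rw [h0]; simp
      simp only [hs, Finset.coe_union, Set.mem_union, Set.Finite.coe_toFinset]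
      exact Or.inr this
    have := h v
    rw [hPs, hQs] at this
    simp only [mul_sub]
    rw [Finset.sum_sub_distrib, this, sub_self]
  -- separating vector
  obtain ⟨v0, hv0⟩ := sep_vec ((s ×ˢ s).filter (fun q => q.1 ≠ q.2) |>.image
      (fun q => q.1 - q.2)) (by
    intro g hg
    obtain ⟨q, hq, rfl⟩ := Finset.mem_image.mp hg
    have := (Finset.mem_filter.mp hq).2
    exact fun he => this (sub_eq_zero.mp he))
  have hinj : Set.InjOn (fun l : V →ₗ[ℝ] ℝ => l v0) s := by
    intro l1 h1 l2 h2 he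
    by_contra hne
    refine hv0 (l1 - l2) (Finset.mem_image.mpr ⟨(l1, l2), Finset.mem_filter.mpr
      ⟨Finset.mem_product.mpr ⟨by simpa using h1, by simpa using h2⟩, hne⟩, rfl⟩) ?_
    simpa [LinearMap.sub_apply, sub_eq_zero] using he
  -- conclude pointwise
  have key : ∀ l ∈ s, ∀ w : V, P l w = Q l w := by
    intro l hl w
    -- polynomials along the line w + t v0
    have hpoly : ∀ l' : V →ₗ[ℝ] ℝ, ∃ p : Polynomial ℂ,
        ∀ t : ℝ, P l' (w + t • v0) - Q l' (w + t • v0) = p.eval (t : ℂ) := by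
      intro l'
      obtain ⟨p1, hp1⟩ := polyFun_line (hP l') w v0
      obtain ⟨p2, hp2⟩ := polyFun_line (hQ l') w v0
      exact ⟨p1 - p2, fun t => by rw [hp1 t, hp2 t]; simp⟩
    choose p hp using hpoly
    have hzero : ∀ t : ℝ, ∑ l' ∈ s,
        (Polynomial.C (Complex.exp ((l' w : ℝ) : ℂ)) * p l').eval (t : ℂ)
        * Complex.exp ((l' v0 * t : ℝ) : ℂ) = 0 := by
      intro t
      have := hsum (w + t • v0)
      rw [Finset.sum_congr rfl (fun l' _ => ?_)] at this
      · exact this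
      · show Complex.exp ((l' (w + t • v0) : ℝ) : ℂ) * (P l' (w + t • v0) - Q l' (w + t • v0))
          = (Polynomial.C (Complex.exp ((l' w : ℝ) : ℂ)) * p l').eval (t : ℂ)
            * Complex.exp ((l' v0 * t : ℝ) : ℂ)
        rw [hp l' t, map_add, map_smul, smul_eq_mul, Polynomial.eval_mul, Polynomial.eval_C]
        rw [show ((l' w + t * l' v0 : ℝ) : ℂ) = ((l' w : ℝ) : ℂ) + ((l' v0 * t : ℝ) : ℂ) by
          push_cast; ring, Complex.exp_add]
        ring
    have := oneDim (fun l' => Polynomial.C (Complex.exp ((l' w : ℝ) : ℂ)) * p l')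
      (fun l' => l' v0) s hinj hzero l hl
    have hpl : p l = 0 := by
      rcases mul_eq_zero.mp this with h1 | h2
      · exact absurd h1 (by
          intro hC
          have := Polynomial.C_eq_zero.mp hC
          exact Complex.exp_ne_zero _ this)
      · exact h2
    have := hp l 0
    rw [hpl] at this
    simpa using sub_eq_zero.mp (by simpa using this)
  intro l
  by_cases hl : l ∈ s
  · funext w; exact key l hl w
  · have hP0 : P l = 0 := by
      by_contra hne
      exact hl (by simp [hs, hne])
    have hQ0 : Q l = 0 := by
      by_contra hne
      exact hl (by simp [hs, hne])
    rw [hP0, hQ0]
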